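/- Let W_θ be a differentiable family of unitaries on ℂ^D ⊗ ℂ^k, W = W_{θ0}, Ẇ = (d/dθ)W_θ|_{θ0}, with unit vectors ψ ∈ ℂ^D, χ ∈ ℂ^k satisfying W(ψ⊗χ) = ψ⊗χ. Let T(ρ) = Tr_u(W(ρ⊗|χ⟩⟨χ|)W*) be the transition operator on ℂ^D and τ = Tr_u(Ẇ|ψ⊗χ⟩⟨ψ⊗χ|Ẇ*). Then for all 1 ≤ j ≤ n, ‖ (P^⊥_ψ ⊗ 1) W^(n)···W^(j+1) Ẇ^(j) (ψ ⊗ χ^⊗n) ‖² = Tr( P^⊥_ψ T^{n−j}(τ) ), where P^⊥_ψ = 1 − |ψ⟩⟨ψ| on ℂ^D and W^(l), Ẇ^(l) are the ampliations acting on the system and the l-th noise unit. -/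

import Mathlib

/-!
Write `ρ(v) = Tr_noise |v⟩⟨v|` for the reduced system state of a vector `v`. If the `p`-th noise
unit of `v` is still in the fresh state `χ`, then `ρ(W⁽ᵖ⁾ v) = T(ρ(v))`: tracing out the other
units commutes with an operator acting only on the system and unit `p`. The excitation
`Ẇ⁽ʲ⁾(ψ ⊗ χ^⊗n)` has reduced state `τ` and leaves all later units fresh, so
`ρ(W⁽ⁿ⁾⋯W⁽ʲ⁺¹⁾ Ẇ⁽ʲ⁾(ψ ⊗ χ^⊗n)) = Tⁿ⁻ʲ(τ)`. Finally `‖(P ⊗ 1) V‖² = Tr(P ρ(V))` for the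
orthogonal projection `P = P^⊥_ψ`.
-/

open scoped BigOperators Matrix Kronecker ComplexConjugate Classical
open Matrix

noncomputable section

/-- Inner product on `ι → ℂ`, conjugate-linear in the first argument. -/
def inn {ι : Type*} [Fintype ι] (v w : ι → ℂ) : ℂ := ∑ i, conj (v i) * w i

/-- Squared norm on `ι → ℂ`. -/
def nsq {ι : Type*} [Fintype ι] (v : ι → ℂ) : ℝ := ∑ i, Complex.normSq (v i)

/-- Tensor product of two vectors. -/
def vtens {α β : Type*} (v : α → ℂ) (w : β → ℂ) : α × β → ℂ := fun p => v p.1 * w p.2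

/-- `n`-fold tensor power of a vector. -/
def vpow {ι : Type*} (n : ℕ) (χ : ι → ℂ) : (Fin n → ι) → ℂ := fun g => ∏ j, χ (g j)

/-- Outer product `|v⟩⟨w|`. -/
def outer {α : Type*} (v w : α → ℂ) : Matrix α α ℂ := fun x y => v x * conj (w y)

/-- Ampliation of an operator on system ⊗ (single noise unit) to system ⊗ (n noise units),
acting on the `j`-th noise unit. -/
def amp {α ι : Type*} [DecidableEq ι] (n : ℕ) (W : Matrix (α × ι) (α × ι) ℂ) (j : Fin n) :
    Matrix (α × (Fin n → ι)) (α × (Fin n → ι)) ℂ :=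
  fun p q => if ∀ l, l ≠ j → p.2 l = q.2 l then W (p.1, p.2 j) (q.1, q.2 j) else 0

/-- The partial product `W⁽ⁿ⁾ ⋯ W⁽ʲ⁺¹⁾` (0-indexed: ampliations at units `> m`). -/
def stepsAfter {α ι : Type*} [Fintype α] [Fintype ι] [DecidableEq α] [DecidableEq ι]
    (n : ℕ) (W : Matrix (α × ι) (α × ι) ℂ) (m : ℕ) :
    Matrix (α × (Fin n → ι)) (α × (Fin n → ι)) ℂ :=
  ((List.ofFn fun l : Fin n => if m < (l : ℕ) then amp n W l else 1).reverse).prod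

/-- Partial trace over the noise unit. -/
def ptraceNoise {α ι : Type*} [Fintype ι] (A : Matrix (α × ι) (α × ι) ℂ) : Matrix α α ℂ :=
  fun s t => ∑ u, A (s, u) (t, u)

/-- Transition operator `T(ρ) = Tr_u (W (ρ ⊗ |χ⟩⟨χ|) W*)`. -/
def tmap {α ι : Type*} [Fintype α] [Fintype ι] (W : Matrix (α × ι) (α × ι) ℂ) (χ : ι → ℂ)
    (ρ : Matrix α α ℂ) : Matrix α α ℂ :=
  ptraceNoise (W * (ρ ⊗ₖ outer χ χ) * Wᴴ)

variable {α β γ ι : Type*} {n : ℕ}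

theorem ofReal_nsq [Fintype α] (v : α → ℂ) : (nsq v : ℂ) = inn v v := by
  simp only [nsq, inn, Complex.ofReal_sum, Complex.normSq_eq_conj_mul_self]

theorem outer_eq_vecMulVec (v w : α → ℂ) : outer v w = vecMulVec v (star w) := rfl

theorem outer_mul_outer [Fintype α] (a b c d : α → ℂ) :
    outer a b * outer c d = inn b c • outer a d := by
  ext x y
  simp only [outer, mul_apply, inn, Matrix.smul_apply, smul_eq_mul, Finset.sum_mul]
  exact Finset.sum_congr rfl fun _ _ => by ring

theorem conjTranspose_outer (v w : α → ℂ) : (outer v w)ᴴ = outer w v := by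
  ext x y
  simp [outer, mul_comm]

theorem mul_outer_mul_conjTranspose [Fintype α] [Fintype γ] (M : Matrix γ α ℂ) (v w : α → ℂ) :
    M * outer v w * Mᴴ = outer (M *ᵥ v) (M *ᵥ w) := by
  rw [outer_eq_vecMulVec, outer_eq_vecMulVec, mul_vecMulVec, vecMulVec_mul, star_mulVec]

theorem outer_kronecker_outer (a b : α → ℂ) (c d : β → ℂ) :
    outer a b ⊗ₖ outer c d = outer (vtens a c) (vtens b d) := by
  ext x y
  simp only [kroneckerMap_apply, outer, vtens, map_mul]
  ring

theorem trace_ptraceNoise_outer [Fintype α] [Fintype β] (v : α × β → ℂ) :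
    (ptraceNoise (outer v v)).trace = (nsq v : ℂ) := by
  rw [ofReal_nsq, inn, Fintype.sum_prod_type]
  simp only [trace, diag_apply, ptraceNoise, outer, mul_comm]

theorem ptraceNoise_kronecker_one_mul_mul [Fintype α] [Fintype β] [Fintype γ] [DecidableEq β]
    (A : Matrix γ α ℂ) (X : Matrix (α × β) (α × β) ℂ) (B : Matrix α γ ℂ) :
    ptraceNoise ((A ⊗ₖ (1 : Matrix β β ℂ)) * X * (B ⊗ₖ (1 : Matrix β β ℂ)))
      = A * ptraceNoise X * B := by
  ext s t
  simp only [ptraceNoise, mul_apply, kroneckerMap_apply, one_apply, Fintype.sum_prod_type,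
    mul_ite, ite_mul, mul_one, mul_zero, zero_mul, Finset.sum_ite_eq, Finset.sum_ite_eq',
    Finset.mem_univ, if_true, Finset.sum_mul, Finset.mul_sum]
  rw [Finset.sum_comm]
  exact Finset.sum_congr rfl fun _ _ => Finset.sum_comm

theorem conjTranspose_mul_self_one_sub_outer [Fintype α] [DecidableEq α] {ψ : α → ℂ}
    (hψ : inn ψ ψ = 1) : (1 - outer ψ ψ)ᴴ * (1 - outer ψ ψ) = 1 - outer ψ ψ := by
  rw [conjTranspose_sub, conjTranspose_one, conjTranspose_outer, sub_mul, mul_sub, mul_sub,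
    outer_mul_outer, hψ, one_smul, one_mul, mul_one, one_mul]
  abel

theorem nsq_kronecker_one_mulVec [Fintype α] [Fintype β] [DecidableEq β] {A : Matrix α α ℂ}
    (hA : Aᴴ * A = A) (V : α × β → ℂ) :
    (nsq ((A ⊗ₖ (1 : Matrix β β ℂ)) *ᵥ V) : ℂ) = (A * ptraceNoise (outer V V)).trace := by
  rw [← trace_ptraceNoise_outer, ← mul_outer_mul_conjTranspose, conjTranspose_kronecker,
    conjTranspose_one, ptraceNoise_kronecker_one_mul_mul, trace_mul_cycle, hA]

theorem one_sub_outer_kronecker_one_mulVec [Fintype α] [Fintype β] [DecidableEq α]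
    [DecidableEq β] (ψ : α → ℂ) (V : α × β → ℂ) :
    ((1 - outer ψ ψ) ⊗ₖ (1 : Matrix β β ℂ)) *ᵥ V
      = fun x => V x - ψ x.1 * ∑ t, conj (ψ t) * V (t, x.2) := by
  ext ⟨s, g⟩
  simp [mulVec, dotProduct, outer, one_apply, Fintype.sum_prod_type, sub_mul, ite_mul,
    Finset.sum_sub_distrib, Finset.mul_sum, mul_assoc]

theorem tmap_outer [Fintype α] [Fintype β] (W : Matrix (α × β) (α × β) ℂ) (χ : β → ℂ)
    (a : α → ℂ) :
    tmap W χ (outer a a) = ptraceNoise (outer (W *ᵥ vtens a χ) (W *ᵥ vtens a χ)) := by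
  rw [tmap, outer_kronecker_outer, mul_outer_mul_conjTranspose]

@[simps]
def tmapLinearMap [Fintype α] [Fintype β] (W : Matrix (α × β) (α × β) ℂ) (χ : β → ℂ) :
    Matrix α α ℂ →ₗ[ℂ] Matrix α α ℂ where
  toFun := tmap W χ
  map_add' ρ σ := by
    ext s t
    simp [tmap, ptraceNoise, add_kronecker, Matrix.mul_add, Matrix.add_mul,
      Finset.sum_add_distrib]
  map_smul' c ρ := by
    ext s t
    simp [tmap, ptraceNoise, smul_kronecker, Finset.mul_sum]

theorem sum_eval_eq_sum_mul_sum_of_update_eq {R : Type*} [CommSemiring R] [Fintype ι]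
    (p : Fin n) (F : (Fin n → ι) → ι → R) (hF : ∀ g u, F (Function.update g p u) = F g)
    {G : ι → R} (hG : ∑ u, G u = 1) :
    ∑ g, F g (g p) = ∑ g, G (g p) * ∑ u, F g u := by
  let σ : Equiv.Perm ((Fin n → ι) × ι) :=
    ⟨fun x => (Function.update x.1 p x.2, x.1 p), fun x => (Function.update x.1 p x.2, x.1 p),
      fun x => by simp, fun x => by simp⟩
  calc ∑ g, F g (g p) = ∑ x : (Fin n → ι) × ι, G x.2 * F x.1 (x.1 p) := by
        simp [Fintype.sum_prod_type, ← Finset.sum_mul, hG]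
    _ = ∑ x : (Fin n → ι) × ι, G (x.1 p) * F x.1 x.2 :=
        Fintype.sum_equiv σ _ _ fun x => by simp [σ, hF]
    _ = ∑ g, G (g p) * ∑ u, F g u := by
        simp [Fintype.sum_prod_type, Finset.mul_sum]

theorem amp_mulVec_apply [Fintype α] [Fintype ι] [DecidableEq ι] (W : Matrix (α × ι) (α × ι) ℂ)
    (p : Fin n) (v : α × (Fin n → ι) → ℂ) (s : α) (g : Fin n → ι) :
    (amp n W p *ᵥ v) (s, g)
      = ∑ t, ∑ u, W (s, g p) (t, u) * v (t, Function.update g p u) := by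
  simp only [mulVec, dotProduct, amp, Fintype.sum_prod_type, ite_mul, zero_mul]
  refine Finset.sum_congr rfl fun t _ => ?_
  have hupd : ∀ u, W (s, g p) (t, u) * v (t, Function.update g p u)
      = ∑ h, if h = Function.update g p u then W (s, g p) (t, h p) * v (t, h) else 0 := by
    simp
  simp_rw [hupd]
  rw [Finset.sum_comm]
  refine Finset.sum_congr rfl fun h _ => ?_
  simp [Function.eq_update_iff, ite_and, eq_comm]

/-- `v = c ⊗ χ` with `χ` in the `p`-th noise unit (`c` ignores that unit). -/
def IsProductAt (χ : ι → ℂ) (p : Fin n) (v : α × (Fin n → ι) → ℂ) : Prop :=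
  ∃ c : (Fin n → ι) → α → ℂ,
    (∀ g u, c (Function.update g p u) = c g) ∧ ∀ s g, v (s, g) = c g s * χ (g p)

theorem isProductAt_vtens_vpow (ψ : α → ℂ) (χ : ι → ℂ) (p : Fin n) :
    IsProductAt χ p (vtens ψ (vpow n χ)) := by
  refine ⟨fun g s => ψ s * ∏ l ∈ Finset.univ.erase p, χ (g l), fun g u => ?_, fun s g => ?_⟩
  · refine funext fun s => congrArg _ (Finset.prod_congr rfl fun l hl => ?_)
    rw [Function.update_of_ne (Finset.ne_of_mem_erase hl)]
  · rw [vtens, vpow, mul_assoc, Finset.prod_erase_mul _ _ (Finset.mem_univ p)]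

theorem IsProductAt.amp_mulVec [Fintype α] [Fintype ι] [DecidableEq ι] {χ : ι → ℂ}
    {p q : Fin n} {v : α × (Fin n → ι) → ℂ} (hv : IsProductAt χ q v) (W : Matrix (α × ι) (α × ι) ℂ)
    (hpq : p ≠ q) : IsProductAt χ q (amp n W p *ᵥ v) := by
  obtain ⟨c, hc, hcv⟩ := hv
  refine ⟨fun g s => ∑ t, ∑ u, W (s, g p) (t, u) * c (Function.update g p u) t,
    fun g u' => funext fun s => ?_, fun s g => ?_⟩
  · simp only [Function.update_of_ne hpq, Function.update_comm hpq.symm, hc]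
  · simp only [amp_mulVec_apply, hcv, Function.update_of_ne hpq.symm, Finset.sum_mul, mul_assoc]

theorem ptraceNoise_outer_vtens_vpow [Fintype ι] (ψ : α → ℂ) {χ : ι → ℂ} (hχ : inn χ χ = 1) :
    ptraceNoise (outer (vtens ψ (vpow n χ)) (vtens ψ (vpow n χ))) = outer ψ ψ := by
  ext s t
  have hprod : ∑ g : Fin n → ι, ∏ l, conj (χ (g l)) * χ (g l) = 1 := by
    rw [← Fintype.prod_sum (fun _ u => conj (χ u) * χ u)]
    simp only [Finset.prod_const, Finset.card_univ, Fintype.card_fin]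
    rw [← inn, hχ, one_pow]
  simp only [ptraceNoise, outer, vtens, vpow, map_mul, map_prod]
  rw [← mul_one (ψ s * conj (ψ t)), ← hprod, Finset.mul_sum]
  refine Finset.sum_congr rfl fun g _ => ?_
  rw [Finset.prod_mul_distrib]
  ring

theorem ptraceNoise_outer_amp_mulVec [Fintype α] [Fintype ι] [DecidableEq ι] {χ : ι → ℂ}
    (hχ : inn χ χ = 1) {p : Fin n} {v : α × (Fin n → ι) → ℂ} (hv : IsProductAt χ p v)
    (W : Matrix (α × ι) (α × ι) ℂ) :
    ptraceNoise (outer (amp n W p *ᵥ v) (amp n W p *ᵥ v))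
      = tmap W χ (ptraceNoise (outer v v)) := by
  obtain ⟨c, hc, hcv⟩ := hv
  set w : (Fin n → ι) → α × ι → ℂ := fun g => W *ᵥ vtens (c g) χ with hw
  have hamp : ∀ s g, (amp n W p *ᵥ v) (s, g) = w g (s, g p) := by
    intro s g
    rw [amp_mulVec_apply]
    simp [hw, mulVec, dotProduct, Fintype.sum_prod_type, hcv, hc, vtens]
  have hρ : ptraceNoise (outer v v) = ∑ g, (conj (χ (g p)) * χ (g p)) • outer (c g) (c g) := by
    ext s t
    simp only [ptraceNoise, outer, hcv, Matrix.sum_apply, Matrix.smul_apply, smul_eq_mul,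
      map_mul]
    exact Finset.sum_congr rfl fun g _ => by ring
  ext s t
  calc ptraceNoise (outer (amp n W p *ᵥ v) (amp n W p *ᵥ v)) s t
      = ∑ g, w g (s, g p) * conj (w g (t, g p)) := by simp only [ptraceNoise, outer, hamp]
    _ = ∑ g, (conj (χ (g p)) * χ (g p)) * ∑ u, w g (s, u) * conj (w g (t, u)) :=
        sum_eval_eq_sum_mul_sum_of_update_eq p (fun g u => w g (s, u) * conj (w g (t, u)))
          (fun g u => by simp only [hw, hc]) hχ
    _ = tmap W χ (ptraceNoise (outer v v)) s t := by
        rw [hρ, ← tmapLinearMap_apply, map_sum]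
        simp only [map_smul, tmapLinearMap_apply, tmap_outer, Matrix.sum_apply,
          Matrix.smul_apply, smul_eq_mul, ptraceNoise, outer, hw]

theorem prod_reverse_ofFn_ite_eq_one {M : Type*} [Monoid M] {n : ℕ} (A : Fin n → M) {m : ℕ}
    (hm : n ≤ m + 1) :
    (List.ofFn fun l : Fin n => if m < (l : ℕ) then A l else 1).reverse.prod = 1 := by
  rw [show (fun l : Fin n => if m < (l : ℕ) then A l else 1) = fun _ => 1 from
    funext fun l => if_neg (by omega)]
  simp

theorem prod_reverse_ofFn_ite_succ {M : Type*} [Monoid M] {n : ℕ} (A : Fin n → M) {m : ℕ}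
    (hm : m + 1 < n) :
    (List.ofFn fun l : Fin n => if m < (l : ℕ) then A l else 1).reverse.prod
      = (List.ofFn fun l : Fin n => if m + 1 < (l : ℕ) then A l else 1).reverse.prod
        * A ⟨m + 1, hm⟩ := by
  induction n with
  | zero => omega
  | succ n ih =>
    simp only [List.ofFn_succ', List.concat_eq_append, List.reverse_concat', List.prod_cons,
      Fin.val_last, Fin.val_castSucc]
    rcases Nat.lt_or_eq_of_le (Nat.le_of_lt_succ hm) with hlt | heq
    · rw [if_pos (by omega), if_pos hlt, ih (fun l => A l.castSucc) hlt, mul_assoc]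
      rfl
    · subst heq
      rw [if_pos (by omega), if_neg (lt_irrefl _), prod_reverse_ofFn_ite_eq_one _ le_rfl,
        prod_reverse_ofFn_ite_eq_one _ (by omega), mul_one, one_mul, one_mul]
      rfl

section Steps

variable [Fintype α] [Fintype ι] [DecidableEq α] [DecidableEq ι]

theorem stepsAfter_eq_one (W : Matrix (α × ι) (α × ι) ℂ) {m : ℕ} (hm : n ≤ m + 1) :
    stepsAfter n W m = 1 :=
  prod_reverse_ofFn_ite_eq_one _ hm

theorem stepsAfter_eq_mul (W : Matrix (α × ι) (α × ι) ℂ) {m : ℕ} (hm : m + 1 < n) :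
    stepsAfter n W m = stepsAfter n W (m + 1) * amp n W ⟨m + 1, hm⟩ :=
  prod_reverse_ofFn_ite_succ _ hm

theorem ptraceNoise_outer_stepsAfter_mulVec {χ : ι → ℂ} (hχ : inn χ χ = 1)
    (W : Matrix (α × ι) (α × ι) ℂ) (d m : ℕ) (hmd : m + 1 + d = n)
    {v : α × (Fin n → ι) → ℂ} (hv : ∀ q : Fin n, m < (q : ℕ) → IsProductAt χ q v) :
    ptraceNoise (outer (stepsAfter n W m *ᵥ v) (stepsAfter n W m *ᵥ v))
      = (tmap W χ)^[d] (ptraceNoise (outer v v)) := by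
  induction d generalizing m v with
  | zero =>
    rw [stepsAfter_eq_one W (by omega), one_mulVec]
    rfl
  | succ d ih =>
    have hm : m + 1 < n := by omega
    have hv' : ∀ q : Fin n, m + 1 < (q : ℕ) → IsProductAt χ q (amp n W ⟨m + 1, hm⟩ *ᵥ v) :=
      fun q hq => (hv q (by omega)).amp_mulVec W (Fin.ne_of_val_ne (ne_of_lt hq))
    rw [stepsAfter_eq_mul W hm, ← mulVec_mulVec, ih (m + 1) (by omega) hv',
      ptraceNoise_outer_amp_mulVec hχ (hv _ m.lt_succ_self) W, Function.iterate_succ_apply]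

end Steps

/-- `‖(P^⊥_ψ ⊗ 1) W⁽ⁿ⁾⋯W⁽ʲ⁺¹⁾ Ẇ⁽ʲ⁾ (ψ ⊗ χ^⊗n)‖² = Tr(P^⊥_ψ T^{n-j}(τ))`. -/
theorem projected_excitation_norm_eq_trace
    (D k n : ℕ) (θ0 : ℝ)
    (W : ℝ → Matrix (Fin D × Fin k) (Fin D × Fin k) ℂ)
    (Wd : Matrix (Fin D × Fin k) (Fin D × Fin k) ℂ)
    (ψ : Fin D → ℂ) (χ : Fin k → ℂ) (hψ : nsq ψ = 1) (hχ : nsq χ = 1)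
    (τ : Matrix (Fin D) (Fin D) ℂ)
    (hτ : τ = ptraceNoise (outer (Wd.mulVec (vtens ψ χ)) (Wd.mulVec (vtens ψ χ))))
    (j : ℕ) (hj1 : 1 ≤ j) (hjn : j ≤ n)
    (V : (Fin D × (Fin n → Fin k)) → ℂ)
    (hV : V = (stepsAfter n (W θ0) (j - 1)
      * amp n Wd ⟨j - 1, by omega⟩).mulVec (vtens ψ (vpow n χ))) :
    (nsq (fun x : Fin D × (Fin n → Fin k) =>
        V x - ψ x.1 * ∑ t, conj (ψ t) * V (t, x.2)) : ℂ)
      = (((1 : Matrix (Fin D) (Fin D) ℂ) - outer ψ ψ)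
          * ((tmap (W θ0) χ)^[n - j] τ)).trace := by
  have hψ' : inn ψ ψ = 1 := by rw [← ofReal_nsq, hψ, Complex.ofReal_one]
  have hχ' : inn χ χ = 1 := by rw [← ofReal_nsq, hχ, Complex.ofReal_one]
  have hρV : ptraceNoise (outer V V) = (tmap (W θ0) χ)^[n - j] τ := by
    rw [hV, ← mulVec_mulVec,
      ptraceNoise_outer_stepsAfter_mulVec hχ' (W θ0) (n - j) (j - 1) (by omega)
        fun q hq => (isProductAt_vtens_vpow ψ χ _).amp_mulVec Wd (Fin.ne_of_val_ne (ne_of_lt hq)),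
      ptraceNoise_outer_amp_mulVec hχ' (isProductAt_vtens_vpow ψ χ _) Wd,
      ptraceNoise_outer_vtens_vpow ψ hχ', tmap_outer, hτ]
  rw [← one_sub_outer_kronecker_one_mulVec,
    nsq_kronecker_one_mulVec (conjTranspose_mul_self_one_sub_outer hψ'), hρV]
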